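/- Let P, Q be Laurent polynomials in z = e^{ix/2} with complex coefficients such that deg(P) ≤ L, deg(Q) ≤ L, both have parity L mod 2, and |P(x)|² + |Q(x)|² = 1 for all real x. Then there exist real angles φ, θ₀, ..., θ_L and φ₀, ..., φ_L such that [[P(x), -Q(x)], [Q*(x), P*(x)]] = R_Z(φ) R_Y(θ₀) R_Z(φ₀) · ∏_{j=1}^{L} R_Z(x) R_Y(θ_j) R_Z(φ_j) for all real x. -/

import Mathlib

open Complex Matrix

noncomputable def RZ (x : ℝ) : Matrix (Fin 2) (Fin 2) ℂ :=
  !![Complex.exp (-(Complex.I * x) / 2), 0; 0, Complex.exp (Complex.I * x / 2)]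

noncomputable def RY (θ : ℝ) : Matrix (Fin 2) (Fin 2) ℂ :=
  !![(Real.cos (θ / 2) : ℂ), -(Real.sin (θ / 2) : ℂ);
     (Real.sin (θ / 2) : ℂ), (Real.cos (θ / 2) : ℂ)]

noncomputable def W (θ φ : ℝ) : Matrix (Fin 2) (Fin 2) ℂ := RY θ * RZ φ

/-
Induction on `L`, peeling off one layer `R_Z(x) R_Y(θ) R_Z(φ)` at a time. Write `S(P, Q)` for the
matrix `[[P, -Q], [Q*, P*]]`; it has determinant `|P|² + |Q|²`, and these matrices are closed under
products. Comparing the coefficients of `e^{iLx}` in `|P|² + |Q|² = 1` gives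
`p_L p̄_{-L} + q_L q̄_{-L} = 0`, so the two linear conditions "the coefficient of degree `L + 1` of
`P'` and that of degree `-(L + 1)` of `Q'` vanish", where `S(P', Q') = S(P, Q) · layer⁻¹`, have a
common nonzero solution, which after rescaling is the first row of some `R_Y(θ) R_Z(φ)`. Then
`P'`, `Q'` have degree `L - 1` and parity `L - 1`; for `L = 0` the matrix is constant and is
decomposed by Euler angles.
-/

open ComplexConjugate Finset
open scoped Real

def su2Matrix (a b : ℂ) : Matrix (Fin 2) (Fin 2) ℂ := !![a, -b; conj b, conj a]

lemma su2Matrix_mul (a b c d : ℂ) :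
    su2Matrix a b * su2Matrix c d = su2Matrix (a * c - b * conj d) (a * d + b * conj c) := by
  ext i j
  fin_cases i <;> fin_cases j <;> simp [su2Matrix] <;> ring

lemma det_su2Matrix (a b : ℂ) : (su2Matrix a b).det = ((‖a‖ ^ 2 + ‖b‖ ^ 2 : ℝ) : ℂ) := by
  rw [su2Matrix, det_fin_two_of]
  push_cast
  rw [← mul_conj', ← mul_conj']
  ring

lemma su2Matrix_eq_mul (P Q a b : ℂ) (h : ‖a‖ ^ 2 + ‖b‖ ^ 2 = 1) :
    su2Matrix P Q = su2Matrix (P * conj a + Q * conj b) (Q * a - P * b) * su2Matrix a b := by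
  have h' : a * conj a + b * conj b = 1 := by
    rw [mul_conj', mul_conj']; exact_mod_cast h
  rw [su2Matrix_mul]
  congr 1
  · linear_combination -P * h'
  · linear_combination -Q * h'

lemma RZ_eq_su2Matrix (φ : ℝ) : RZ φ = su2Matrix (Complex.exp (-(I * φ) / 2)) 0 := by
  rw [RZ, su2Matrix, ← Complex.exp_conj]
  simp [map_ofNat]

lemma RY_eq_su2Matrix (θ : ℝ) : RY θ = su2Matrix (Real.cos (θ / 2)) (Real.sin (θ / 2)) := by
  simp only [RY, su2Matrix, conj_ofReal]

lemma RZ_mul_su2Matrix (φ : ℝ) (a b : ℂ) :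
    RZ φ * su2Matrix a b =
      su2Matrix (Complex.exp (-(I * φ) / 2) * a) (Complex.exp (-(I * φ) / 2) * b) := by
  simp [RZ_eq_su2Matrix, su2Matrix_mul]

lemma RZ_neg_mul_RZ (φ : ℝ) : RZ (-φ) * RZ φ = 1 := by
  have h : -(I * ((-φ : ℝ) : ℂ)) / 2 + -(I * φ) / 2 = 0 := by push_cast; ring
  rw [RZ_eq_su2Matrix φ, RZ_mul_su2Matrix, ← Complex.exp_add, h, Complex.exp_zero, mul_zero,
    su2Matrix, one_fin_two]
  simp

lemma det_RZ (φ : ℝ) : (RZ φ).det = 1 := by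
  rw [RZ_eq_su2Matrix, det_su2Matrix, norm_exp]
  simp

lemma det_RY (θ : ℝ) : (RY θ).det = 1 := by
  rw [RY_eq_su2Matrix, det_su2Matrix, norm_real, norm_real, Real.norm_eq_abs, Real.norm_eq_abs,
    sq_abs, sq_abs, Real.cos_sq_add_sin_sq, ofReal_one]

lemma RZ_mul_RY_mul_RZ (φ₁ θ φ₂ : ℝ) :
    RZ φ₁ * RY θ * RZ φ₂ =
      su2Matrix (Complex.exp (-(I * φ₁) / 2) * Real.cos (θ / 2) * Complex.exp (-(I * φ₂) / 2))
        (Complex.exp (-(I * φ₁) / 2) * Real.sin (θ / 2) * Complex.exp (I * φ₂ / 2)) := by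
  rw [RY_eq_su2Matrix, RZ_mul_su2Matrix, RZ_eq_su2Matrix φ₂, su2Matrix_mul, ← Complex.exp_conj]
  simp [map_ofNat]

lemma exp_mul_ofReal_mul_exp (u v : ℂ) (r : ℝ) :
    Complex.exp u * r * Complex.exp v = r * Complex.exp (u + v) := by
  rw [Complex.exp_add]; ring

lemma exists_su2Matrix_eq_RZ_mul_RY_mul_RZ (a b : ℂ) (h : ‖a‖ ^ 2 + ‖b‖ ^ 2 = 1) :
    ∃ φ₁ θ φ₂ : ℝ, su2Matrix a b = RZ φ₁ * RY θ * RZ φ₂ := by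
  have hb : ‖b‖ ≤ 1 := by nlinarith [norm_nonneg a, norm_nonneg b]
  refine ⟨-(arg a + arg b), 2 * Real.arcsin ‖b‖, arg b - arg a, ?_⟩
  have hsin : Real.sin (2 * Real.arcsin ‖b‖ / 2) = ‖b‖ := by
    rw [mul_div_cancel_left₀ _ two_ne_zero, Real.sin_arcsin (by linarith [norm_nonneg b]) hb]
  have hcos : Real.cos (2 * Real.arcsin ‖b‖ / 2) = ‖a‖ := by
    rw [mul_div_cancel_left₀ _ two_ne_zero, Real.cos_arcsin, ← h, add_sub_cancel_right,
      Real.sqrt_sq (norm_nonneg a)]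
  rw [RZ_mul_RY_mul_RZ, hsin, hcos, exp_mul_ofReal_mul_exp, exp_mul_ofReal_mul_exp]
  conv_lhs => rw [← norm_mul_exp_arg_mul_I a, ← norm_mul_exp_arg_mul_I b]
  congr 3 <;> push_cast <;> ring

lemma exists_W_eq_su2Matrix_smul (u w : ℂ) (h : u ≠ 0 ∨ w ≠ 0) :
    ∃ (θ φ : ℝ) (κ : ℂ), W θ φ = su2Matrix (κ * u) (κ * w) := by
  have hpos : 0 < ‖u‖ ^ 2 + ‖w‖ ^ 2 := by rcases h with h | h <;> positivity
  set r := √(‖u‖ ^ 2 + ‖w‖ ^ 2)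
  obtain ⟨φ₁, θ, φ₂, hE⟩ := exists_su2Matrix_eq_RZ_mul_RY_mul_RZ (u / r) (w / r) (by
    rw [norm_div, norm_div, norm_real, Real.norm_of_nonneg (Real.sqrt_nonneg _), div_pow, div_pow,
      ← add_div, Real.sq_sqrt hpos.le, div_self hpos.ne'])
  refine ⟨θ, φ₂, Complex.exp (-(I * (-φ₁ : ℝ)) / 2) / r, ?_⟩
  rw [W, ← one_mul (RY θ), ← RZ_neg_mul_RZ φ₁, mul_assoc, mul_assoc (RZ (-φ₁)), ← mul_assoc (RZ φ₁),
    ← hE, RZ_mul_su2Matrix]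
  congr 1 <;> ring

noncomputable def expHalf (n : ℤ) (x : ℝ) : ℂ := Complex.exp (I * n * x / 2)

lemma expHalf_add (m n : ℤ) (x : ℝ) : expHalf (m + n) x = expHalf m x * expHalf n x := by
  rw [expHalf, expHalf, expHalf, ← Complex.exp_add]; push_cast; ring_nf

lemma expHalf_zero (x : ℝ) : expHalf 0 x = 1 := by simp [expHalf]

lemma conj_expHalf (n : ℤ) (x : ℝ) : conj (expHalf n x) = expHalf (-n) x := by
  rw [expHalf, expHalf, ← Complex.exp_conj]; simp [map_ofNat]

lemma expHalf_neg_one (x : ℝ) : expHalf (-1) x = Complex.exp (-(I * x) / 2) := by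
  rw [expHalf]; push_cast; ring_nf

-- `x ↦ e^{inx/2}` are the Fourier characters of `ℝ/4πℤ`, which are orthonormal in `L²`.
lemma eq_zero_of_sum_mul_expHalf_eq_zero (s : Finset ℤ) (c : ℤ → ℂ)
    (h : ∀ x : ℝ, ∑ n ∈ s, c n * expHalf n x = 0) : ∀ n ∈ s, c n = 0 := by
  have : Fact (0 < 4 * π) := ⟨by positivity⟩
  have hcont : ∑ n ∈ s, c n • fourier (T := 4 * π) n = 0 := by
    ext y
    induction y using QuotientAddGroup.induction_on with
    | H x =>
      rw [ContinuousMap.zero_apply, ← h x]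
      simp only [ContinuousMap.coe_sum, ContinuousMap.coe_smul, Finset.sum_apply, Pi.smul_apply,
        fourier_coe_apply, smul_eq_mul, expHalf]
      refine Finset.sum_congr rfl fun n _ => ?_
      congr 2
      field_simp
      push_cast
      ring
  have hLp : ∑ n ∈ s, c n • fourierLp (T := 4 * π) 2 n = 0 := by
    simp only [fourierLp, ← map_smul, ← map_sum, hcont, map_zero]
  exact linearIndependent_iff'.mp orthonormal_fourier.linearIndependent s c hLp

noncomputable def laurentSum (N : ℕ) (c : ℤ → ℂ) (x : ℝ) : ℂ :=
  ∑ n ∈ Icc (-(N : ℤ)) N, c n * expHalf n x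

lemma laurentSum_zero (c : ℤ → ℂ) (x : ℝ) : laurentSum 0 c x = c 0 := by
  simp [laurentSum, expHalf_zero]

lemma laurentSum_linearCombination (N : ℕ) (a b : ℂ) (c d : ℤ → ℂ) (x : ℝ) :
    laurentSum N (fun n => a * c n + b * d n) x = a * laurentSum N c x + b * laurentSum N d x := by
  simp only [laurentSum, mul_sum, ← sum_add_distrib]
  exact sum_congr rfl fun n _ => by ring

lemma laurentSum_shift (L : ℕ) (d : ℤ → ℂ) (k : ℤ) (hk : k = 1 ∨ k = -1)
    (hd : ∀ n : ℤ, (L : ℤ) < |n| → d (n - k) = 0) (x : ℝ) :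
    laurentSum L (fun n => d (n - k)) x = expHalf k x * laurentSum (L + 1) d x := by
  have hsub : Icc (-(L : ℤ)) L ⊆ Icc (-((L + 1 : ℕ) : ℤ) + k) ((L + 1 : ℕ) + k) := by
    intro n; simp only [mem_Icc]; omega
  rw [laurentSum, sum_subset hsub fun n _ hn => by
    rw [hd n (by simp only [mem_Icc] at hn; rw [lt_abs]; omega), zero_mul]]
  rw [laurentSum, mul_sum, ← map_add_right_Icc, sum_map]
  refine sum_congr rfl fun n _ => ?_
  simp only [addRightEmbedding_apply, add_sub_cancel_right, expHalf_add]
  ring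

structure IsParityLaurent (L : ℕ) (c : ℤ → ℂ) : Prop where
  deg : ∀ n : ℤ, (L : ℤ) < |n| → c n = 0
  parity : ∀ n : ℤ, n % 2 ≠ (L : ℤ) % 2 → c n = 0

lemma IsParityLaurent.linearCombination {L : ℕ} {c d : ℤ → ℂ} (hc : IsParityLaurent L c)
    (hd : IsParityLaurent L d) (a b : ℂ) : IsParityLaurent L (fun n => a * c n + b * d n) where
  deg n hn := by simp [hc.deg n hn, hd.deg n hn]
  parity n hn := by simp [hc.parity n hn, hd.parity n hn]

lemma IsParityLaurent.shift {L : ℕ} {d : ℤ → ℂ} (hd : IsParityLaurent (L + 1) d) (k : ℤ)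
    (hk : k = 1 ∨ k = -1) (hedge : d (k * (L + 1)) = 0) :
    IsParityLaurent L (fun n => d (n - k)) where
  deg n hn := by
    have hcases : n - k = k * (L + 1) ∨ (n - k) % 2 ≠ ((L + 1 : ℕ) : ℤ) % 2 ∨
        ((L + 1 : ℕ) : ℤ) < |n - k| := by
      rw [lt_abs] at hn ⊢; push_cast; rcases hk with rfl | rfl <;> omega
    rcases hcases with hext | hpar | hbig
    · exact hext ▸ hedge
    · exact hd.parity _ hpar
    · exact hd.deg _ hbig
  parity n hn := hd.parity _ (by push_cast; omega)

noncomputable def conjConv (M : ℕ) (f g : ℤ → ℂ) (k : ℤ) : ℂ :=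
  ∑ n ∈ Icc (-(M : ℤ)) M, f n * conj (g (n - k))

lemma laurentSum_mul_conj (M : ℕ) (f g : ℤ → ℂ) (hg : ∀ n : ℤ, (M : ℤ) < |n| → g n = 0) (x : ℝ) :
    laurentSum M f x * conj (laurentSum M g x) = laurentSum (2 * M) (conjConv M f g) x := by
  rw [laurentSum, laurentSum, map_sum, sum_mul_sum, laurentSum]
  simp only [conjConv, map_mul, conj_expHalf, sum_mul]
  conv_rhs => rw [sum_comm]
  refine sum_congr rfl fun n hn => ?_
  rw [mem_Icc] at hn
  have hsub : Icc (n - M) (n + M) ⊆ Icc (-((2 * M : ℕ) : ℤ)) ((2 * M : ℕ) : ℤ) := by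
    intro k; simp only [mem_Icc]; omega
  rw [← sum_subset (f := fun k => f n * conj (g (n - k)) * expHalf k x) hsub fun k _ hk => by
    rw [hg (n - k) (by simp only [mem_Icc] at hk; rw [lt_abs]; omega), map_zero, mul_zero,
      zero_mul]]
  refine sum_nbij' (fun m => n - m) (fun k => n - k) (fun m hm => ?_) (fun k hk => ?_)
    (fun m _ => by omega) (fun k _ => by omega) (fun m _ => ?_)
  · simp only [mem_Icc] at hm ⊢; omega
  · simp only [mem_Icc] at hk ⊢; omega
  · rw [sub_sub_cancel, sub_eq_add_neg, expHalf_add]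
    ring

lemma conjConv_two_mul (M : ℕ) (f g : ℤ → ℂ) (hg : ∀ n : ℤ, (M : ℤ) < |n| → g n = 0) :
    conjConv M f g (2 * M) = f M * conj (g (-M)) := by
  rw [conjConv, sum_eq_single_of_mem (M : ℤ) (by simp)]
  · ring_nf
  · intro n hn hne
    rw [mem_Icc] at hn
    rw [hg _ (by rw [lt_abs]; omega), map_zero, mul_zero]

lemma extreme_coeffs_orthogonal (M : ℕ) (hM : 0 < M) (p q : ℤ → ℂ)
    (hp : ∀ n : ℤ, (M : ℤ) < |n| → p n = 0) (hq : ∀ n : ℤ, (M : ℤ) < |n| → q n = 0)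
    (hnorm : ∀ x : ℝ, ‖laurentSum M p x‖ ^ 2 + ‖laurentSum M q x‖ ^ 2 = 1) :
    p M * conj (p (-M)) + q M * conj (q (-M)) = 0 := by
  -- the coefficients of `|P|² + |Q|² - 1`
  set c : ℤ → ℂ := fun k => conjConv M p p k + conjConv M q q k - if k = 0 then 1 else 0
  have hc : ∀ x : ℝ, laurentSum (2 * M) c x = 0 := fun x => by
    have hunit : laurentSum M p x * conj (laurentSum M p x)
        + laurentSum M q x * conj (laurentSum M q x) = 1 := by
      rw [mul_conj', mul_conj']; exact_mod_cast hnorm x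
    rw [laurentSum_mul_conj M p p hp, laurentSum_mul_conj M q q hq] at hunit
    simp only [c, laurentSum, sub_mul, add_mul, sum_sub_distrib, sum_add_distrib, ite_mul, one_mul,
      zero_mul, sum_ite_eq', mem_Icc] at hunit ⊢
    rw [hunit, if_pos (by omega), expHalf_zero, sub_self]
  have h2M := eq_zero_of_sum_mul_expHalf_eq_zero _ c hc (2 * M) (by simp only [mem_Icc]; omega)
  simpa only [c, conjConv_two_mul M _ _ hp, conjConv_two_mul M _ _ hq,
    if_neg (by omega : (2 * M : ℤ) ≠ 0), sub_zero] using h2M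

lemma det_RZ_mul_RY_mul_RZ (φ₁ θ φ₂ : ℝ) : (RZ φ₁ * RY θ * RZ φ₂).det = 1 := by
  rw [det_mul, det_mul, det_RZ, det_RY, det_RZ, one_mul, one_mul]

lemma exists_W_eq_su2Matrix_of_orthogonal (a b c d : ℂ) (h : a * conj c + b * conj d = 0) :
    ∃ (θ φ : ℝ) (A B : ℂ), W θ φ = su2Matrix A B ∧
      conj A * a + conj B * b = 0 ∧ A * d + -B * c = 0 := by
  have h' : conj a * c + conj b * d = 0 := by simpa using congrArg conj h
  obtain ⟨v, hv0, hMv⟩ := (exists_vecMul_eq_zero_iff (M := !![conj a, d; conj b, -c])).mpr (by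
    rw [det_fin_two_of]; linear_combination -h')
  have h0 : v 0 * conj a + v 1 * conj b = 0 := by
    simpa [vecMul, dotProduct, Fin.sum_univ_two] using congrFun hMv 0
  have h1 : v 0 * d + v 1 * -c = 0 := by
    simpa [vecMul, dotProduct, Fin.sum_univ_two] using congrFun hMv 1
  have hv : v 0 ≠ 0 ∨ v 1 ≠ 0 := by
    contrapose! hv0
    ext i; fin_cases i <;> simp [hv0]
  obtain ⟨θ, φ, κ, hW⟩ := exists_W_eq_su2Matrix_smul _ _ hv
  refine ⟨θ, φ, κ * v 0, κ * v 1, hW, ?_, by linear_combination κ * h1⟩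
  have h0' : conj (v 0) * a + conj (v 1) * b = 0 := by simpa using congrArg conj h0
  simp only [map_mul]
  linear_combination conj κ * h0'

lemma exists_su2Matrix_eq_mul_layer (L : ℕ) (p q : ℤ → ℂ) (hp : IsParityLaurent (L + 1) p)
    (hq : IsParityLaurent (L + 1) q)
    (hnorm : ∀ x : ℝ, ‖laurentSum (L + 1) p x‖ ^ 2 + ‖laurentSum (L + 1) q x‖ ^ 2 = 1) :
    ∃ (p' q' : ℤ → ℂ) (θ φ : ℝ), IsParityLaurent L p' ∧ IsParityLaurent L q' ∧
      ∀ x : ℝ, su2Matrix (laurentSum (L + 1) p x) (laurentSum (L + 1) q x) =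
        su2Matrix (laurentSum L p' x) (laurentSum L q' x) * (RZ x * RY θ * RZ φ) := by
  obtain ⟨θ, φ, A, B, hW, htop, hbot⟩ := exists_W_eq_su2Matrix_of_orthogonal _ _ _ _
    (extreme_coeffs_orthogonal (L + 1) L.succ_pos p q hp.deg hq.deg hnorm)
  have hp' := (hp.linearCombination hq (conj A) (conj B)).shift 1 (Or.inl rfl) (by simpa using htop)
  have hq' := (hq.linearCombination hp A (-B)).shift (-1) (Or.inr rfl) (by simpa using hbot)
  refine ⟨_, _, θ, φ, hp', hq', fun x => ?_⟩
  have hlayer : RZ x * RY θ * RZ φ = su2Matrix (expHalf (-1) x * A) (expHalf (-1) x * B) := by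
    rw [mul_assoc, ← W, hW, RZ_mul_su2Matrix, expHalf_neg_one]
  have hunit : ‖expHalf (-1) x * A‖ ^ 2 + ‖expHalf (-1) x * B‖ ^ 2 = 1 := by
    have hdet := det_RZ_mul_RY_mul_RZ x θ φ
    rwa [hlayer, det_su2Matrix, ofReal_eq_one] at hdet
  rw [laurentSum_shift L (fun n => conj A * p n + conj B * q n) 1 (Or.inl rfl) hp'.deg,
    laurentSum_shift L (fun n => A * q n + -B * p n) (-1) (Or.inr rfl) hq'.deg,
    laurentSum_linearCombination, laurentSum_linearCombination, hlayer,
    su2Matrix_eq_mul _ _ _ _ hunit]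
  congr 2
  · simp only [map_mul, conj_expHalf, neg_neg]
    ring
  · ring

theorem exists_angles_of_isParityLaurent (L : ℕ) (p q : ℤ → ℂ) (hp : IsParityLaurent L p)
    (hq : IsParityLaurent L q)
    (hnorm : ∀ x : ℝ, ‖laurentSum L p x‖ ^ 2 + ‖laurentSum L q x‖ ^ 2 = 1) :
    ∃ (φbar : ℝ) (θ φ : Fin (L + 1) → ℝ), ∀ x : ℝ,
      su2Matrix (laurentSum L p x) (laurentSum L q x) =
      RZ φbar * RY (θ 0) * RZ (φ 0) *
        (List.ofFn fun j : Fin L => RZ x * RY (θ j.succ) * RZ (φ j.succ)).prod := by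
  induction L generalizing p q with
  | zero =>
    obtain ⟨φ₁, θ, φ₂, h⟩ := exists_su2Matrix_eq_RZ_mul_RY_mul_RZ (p 0) (q 0) (by
      simpa only [laurentSum_zero] using hnorm 0)
    exact ⟨φ₁, fun _ => θ, fun _ => φ₂, fun x => by simpa [laurentSum_zero] using h⟩
  | succ L ih =>
    obtain ⟨p', q', θL, φL, hp', hq', hpeel⟩ := exists_su2Matrix_eq_mul_layer L p q hp hq hnorm
    have hnorm' : ∀ x, ‖laurentSum L p' x‖ ^ 2 + ‖laurentSum L q' x‖ ^ 2 = 1 := fun x => by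
      have hdet := congrArg det (hpeel x)
      rw [det_mul, det_RZ_mul_RY_mul_RZ, mul_one, det_su2Matrix, det_su2Matrix, hnorm x] at hdet
      exact_mod_cast hdet.symm
    obtain ⟨φbar, θ, φ, h⟩ := ih p' q' hp' hq' hnorm'
    refine ⟨φbar, Fin.snoc θ θL, Fin.snoc φ φL, fun x => ?_⟩
    rw [hpeel x, h x, List.ofFn_succ', List.prod_concat]
    simp only [Fin.snoc_apply_zero, Fin.succ_castSucc, Fin.snoc_castSucc, Fin.succ_last,
      Fin.snoc_last, mul_assoc]

/-- complex-coefficient Laurent polynomials `P, Q` in `e^{ix/2}` with degree at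
most `L`, parity `L mod 2` and `|P|² + |Q|² = 1` on ℝ arise from a QNN
`R_Z(φ) R_Y(θ₀) R_Z(φ₀) ∏_{j=1}^L R_Z(x) R_Y(θ_j) R_Z(φ_j)`. -/
theorem stmt3 (L : ℕ) (p q : ℤ → ℂ) (P Q : ℝ → ℂ)
    (hP : ∀ x : ℝ, P x = ∑ n ∈ Finset.Icc (-(L : ℤ)) (L : ℤ),
        p n * Complex.exp (Complex.I * (n : ℂ) * (x : ℂ) / 2))
    (hQ : ∀ x : ℝ, Q x = ∑ n ∈ Finset.Icc (-(L : ℤ)) (L : ℤ),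
        q n * Complex.exp (Complex.I * (n : ℂ) * (x : ℂ) / 2))
    (hpdeg : ∀ n : ℤ, (L : ℤ) < |n| → p n = 0)
    (hqdeg : ∀ n : ℤ, (L : ℤ) < |n| → q n = 0)
    (hppar : ∀ n : ℤ, n % 2 ≠ (L : ℤ) % 2 → p n = 0)
    (hqpar : ∀ n : ℤ, n % 2 ≠ (L : ℤ) % 2 → q n = 0)
    (hnorm : ∀ x : ℝ, ‖P x‖ ^ 2 + ‖Q x‖ ^ 2 = 1) :
    ∃ (φbar : ℝ) (θ φ : Fin (L + 1) → ℝ), ∀ x : ℝ,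
      !![P x, -Q x; (starRingEnd ℂ) (Q x), (starRingEnd ℂ) (P x)] =
      RZ φbar * RY (θ 0) * RZ (φ 0) *
        (List.ofFn fun j : Fin L => RZ x * RY (θ j.succ) * RZ (φ j.succ)).prod := by
  obtain rfl : P = laurentSum L p := funext hP
  obtain rfl : Q = laurentSum L q := funext hQ
  exact exists_angles_of_isParityLaurent L p q ⟨hpdeg, hppar⟩ ⟨hqdeg, hqpar⟩ hnorm
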